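/- In the slope-extension construction, let x̄ ∈ C, y ∈ X, and k ∈ ℤ be such that f(x̄) ≤ f(y) and ε_{k−3} ≤ d(x̄,y) < ε_{k−2}. Then (f(y) − f(x̄)) / d(x̄,y) ≤ S_{k−1}^c(x̄) + 3L·ε_{k−3}/ε_{k−2}. -/

import Mathlib

open Filter Topology Set

/-!
Comparing `f(y)` with the competitor `x̄` gives `f(y) - f(x̄) ≤ pen_x̄(d(x̄,y))` as soon as
`f(x̄) ≥ g(x̄)`. Since the slopes of `pen_x̄` increase from one interval `[ε_{j-2}, ε_{j-1}]` to
the next, `pen_x̄(t)` is at most the current slope times `t`.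

The lower bound `g(x) + pen_x(d(x,w)) ≥ g(x̄) - 2L·d(x̄,w)`, which gives `f(x̄) ≥ g(x̄)` and keeps
the infimum defining `f(y)` bounded below, rests on `pen_x(t) ≥ S_j^c(x)·t` once `ε_{j-1} ≤ 2t`:
the bonus slope `3L·ε_{j-2}/ε_{j-1}` makes up for the pieces of `pen_x` below `ε_{j-2}`, because
`ε_{k-1}/ε_k ≤ ε/(3(L+ε)) ≤ 1/6`.
-/

section GeometricGrowth

variable {e : ℤ → ℝ} {c : ℝ}

lemma six_mul_le_of_div_le {L ε a b : ℝ} (hε : 0 < ε) (hεL : ε ≤ L) (hb : 0 < b)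
    (h : a / b ≤ ε / (3 * (L + ε))) : 6 * a ≤ b := by
  have hsixth : ε / (3 * (L + ε)) ≤ 1 / 6 := by
    rw [div_le_div_iff₀ (by linarith) (by norm_num)]
    linarith
  linarith [(div_le_iff₀ hb).1 (h.trans hsixth)]

lemma monotone_of_mul_le (hc : 1 ≤ c) (he : ∀ k, 0 ≤ e k) (h : ∀ k, c * e (k - 1) ≤ e k) :
    Monotone e :=
  monotone_int_of_le_succ fun k =>
    (le_mul_of_one_le_left (he k) hc).trans (by simpa using h (k + 1))

lemma pow_mul_le_of_mul_le (hc : 0 ≤ c) (h : ∀ k, c * e (k - 1) ≤ e k) :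
    ∀ (n : ℕ) (m : ℤ), c ^ n * e (m - n) ≤ e m
  | 0, m => by simp
  | n + 1, m => calc
      c ^ (n + 1) * e (m - (n + 1 : ℕ)) = c * (c ^ n * e (m - 1 - n)) := by
        rw [show m - ((n + 1 : ℕ) : ℤ) = m - 1 - n by push_cast; ring]; ring
      _ ≤ c * e (m - 1) := mul_le_mul_of_nonneg_left (pow_mul_le_of_mul_le hc h n (m - 1)) hc
      _ ≤ e m := h m

lemma tendsto_sub_nat_of_mul_le (hc : 1 < c) (he : ∀ k, 0 ≤ e k)
    (h : ∀ k, c * e (k - 1) ≤ e k) (m : ℤ) :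
    Tendsto (fun n : ℕ => e (m - n)) atTop (𝓝 0) := by
  have hbound (n : ℕ) : e (m - n) ≤ e m * c⁻¹ ^ n := by
    rw [inv_pow, ← div_eq_mul_inv, le_div_iff₀' (by positivity)]
    exact pow_mul_le_of_mul_le (by linarith) h n m
  refine squeeze_zero (fun n => he _) hbound ?_
  simpa using (tendsto_pow_atTop_nhds_zero_of_lt_one (by positivity)
    (inv_lt_one_of_one_lt₀ hc)).const_mul (e m)

lemma Monotone.exists_sub_one_le_and_lt {α : Type*} [LinearOrder α] {e : ℤ → α}
    (he : Monotone e) {u : α} (hlo : ∃ a, e a ≤ u) (hhi : ∃ b, u < e b) :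
    ∃ m, e (m - 1) ≤ u ∧ u < e m := by
  obtain ⟨a, ha⟩ := hlo
  obtain ⟨m, hm, hmin⟩ :=
    Int.exists_least_of_bdd ⟨a, fun z hz => (he.reflect_lt (ha.trans_lt hz)).le⟩ hhi
  exact ⟨m, not_lt.1 fun h => by linarith [hmin _ h], hm⟩

lemma exists_sub_one_le_and_lt_of_mul_le (hc : 1 < c) (he : ∀ k, 0 < e k)
    (h : ∀ k, c * e (k - 1) ≤ e k) {u : ℝ} (hu : 0 < u) :
    ∃ m, e (m - 1) ≤ u ∧ u < e m := by
  refine (monotone_of_mul_le hc.le (fun k => (he k).le) h).exists_sub_one_le_and_lt ?_ ?_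
  · obtain ⟨n, hn⟩ :=
      ((tendsto_order.1 (tendsto_sub_nat_of_mul_le hc (fun k => (he k).le) h 0)).2 u hu).exists
    exact ⟨_, hn.le⟩
  · obtain ⟨n, hn⟩ := pow_unbounded_of_one_lt (u / e 0) hc
    refine ⟨n, ?_⟩
    have := pow_mul_le_of_mul_le (by linarith) h n n
    rw [sub_self, div_lt_iff₀ (he 0)] at *
    linarith

end GeometricGrowth

lemma le_mul_of_sub_le_of_tendsto {p : ℝ → ℝ} {a : ℕ → ℝ} {c : ℝ}
    (hp : ContinuousWithinAt p (Ici 0) 0) (hp0 : p 0 = 0) (ha0 : ∀ n, 0 ≤ a n)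
    (ha : Tendsto a atTop (𝓝 0)) (hstep : ∀ n, p (a n) - p (a (n + 1)) ≤ c * (a n - a (n + 1))) :
    p (a 0) ≤ c * a 0 := by
  have hmono : Monotone fun n => p (a n) - c * a n :=
    monotone_nat_of_le_succ fun n => by linarith [hstep n]
  have hpa : Tendsto (fun n => p (a n)) atTop (𝓝 0) :=
    hp0 ▸ hp.tendsto.comp (tendsto_nhdsWithin_iff.2 ⟨ha, Eventually.of_forall ha0⟩)
  have hlim : Tendsto (fun n => p (a n) - c * a n) atTop (𝓝 0) := by
    simpa using hpa.sub (ha.const_mul c)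
  linarith [hmono.ge_of_tendsto hlim 0]

lemma pen_le_mul_of_mem_Icc {e slope : ℤ → ℝ} {p : ℝ → ℝ} (he0 : ∀ k, 0 ≤ e k)
    (he : Monotone e) (hlim : ∀ m, Tendsto (fun n : ℕ => e (m - n)) atTop (𝓝 0))
    (hslope : Monotone slope) (hp : ContinuousWithinAt p (Ici 0) 0) (hp0 : p 0 = 0)
    (hlin : ∀ k s t, e (k - 2) ≤ s → s ≤ t → t ≤ e (k - 1) → p t - p s = slope k * (t - s))
    {k : ℤ} {t : ℝ} (ht₁ : e (k - 2) ≤ t) (ht₂ : t ≤ e (k - 1)) :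
    p t ≤ slope k * t := by
  have hbase : p (e (k - 2 - (0 : ℕ))) ≤ slope k * e (k - 2 - (0 : ℕ)) := by
    refine le_mul_of_sub_le_of_tendsto (a := fun n : ℕ => e (k - 2 - n)) hp hp0 (fun n => he0 _)
      (hlim _) fun n => ?_
    have hn : k - 1 - (n : ℤ) - 2 = k - 2 - ((n + 1 : ℕ) : ℤ) := by push_cast; ring
    have hle : e (k - 2 - ((n + 1 : ℕ) : ℤ)) ≤ e (k - 2 - n) := he (by omega)
    have hstep := hlin (k - 1 - n) _ _ (by rw [hn]) hle
      (by rw [show k - 1 - (n : ℤ) - 1 = k - 2 - n by ring])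
    rw [hstep]
    exact mul_le_mul_of_nonneg_right (hslope (by omega)) (sub_nonneg.2 hle)
  simp only [Nat.cast_zero, sub_zero] at hbase
  linarith [hlin k _ t le_rfl ht₁ ht₂]

section LocalLipConst

variable {X : Type*} [PseudoMetricSpace X] {C : Set X} {g : X → ℝ} {L : ℝ} {x : X}

noncomputable def localLipBounds (C : Set X) (g : X → ℝ) (x : X) (r : ℝ) : Set ℝ :=
  {ℓ : ℝ | 0 ≤ ℓ ∧ ∀ z ∈ C, dist z x < r → |g z - g x| ≤ ℓ * dist x z}

/-- `S_k^c(x) = localLipConst C g x ε_k`. -/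
noncomputable def localLipConst (C : Set X) (g : X → ℝ) (x : X) (r : ℝ) : ℝ :=
  sInf (localLipBounds C g x r)

lemma localLipBounds_bddBelow (r : ℝ) : BddBelow (localLipBounds C g x r) :=
  ⟨0, fun _ hℓ => hℓ.1⟩

lemma localLipConst_nonneg (r : ℝ) : 0 ≤ localLipConst C g x r :=
  Real.sInf_nonneg fun _ hℓ => hℓ.1

lemma mem_localLipBounds (hg : ∀ x ∈ C, ∀ y ∈ C, |g x - g y| ≤ L * dist x y) (hL : 0 ≤ L)
    (hx : x ∈ C) (r : ℝ) : L ∈ localLipBounds C g x r :=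
  ⟨hL, fun z hz _ => dist_comm x z ▸ hg z hz x hx⟩

lemma localLipConst_le (hg : ∀ x ∈ C, ∀ y ∈ C, |g x - g y| ≤ L * dist x y)
    (hL : 0 ≤ L) (hx : x ∈ C) (r : ℝ) : localLipConst C g x r ≤ L :=
  csInf_le (localLipBounds_bddBelow r) (mem_localLipBounds hg hL hx r)

lemma localLipConst_mono (hg : ∀ x ∈ C, ∀ y ∈ C, |g x - g y| ≤ L * dist x y)
    (hL : 0 ≤ L) (hx : x ∈ C) : Monotone (localLipConst C g x) :=
  fun _ _ hrr' => csInf_le_csInf (localLipBounds_bddBelow _) ⟨L, mem_localLipBounds hg hL hx _⟩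
    fun _ ⟨hℓ0, hℓ⟩ => ⟨hℓ0, fun z hz hzr => hℓ z hz (hzr.trans_le hrr')⟩

lemma abs_sub_le_localLipConst_mul (hg : ∀ x ∈ C, ∀ y ∈ C, |g x - g y| ≤ L * dist x y)
    (hL : 0 ≤ L) (hx : x ∈ C) {r : ℝ} {z : X} (hz : z ∈ C)
    (hzr : dist z x < r) : |g z - g x| ≤ localLipConst C g x r * dist x z := by
  rcases (dist_nonneg : 0 ≤ dist x z).eq_or_lt with h0 | h0
  · have := hg z hz x hx
    rw [dist_comm, ← h0, mul_zero] at this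
    rwa [← h0, mul_zero]
  · rw [← div_le_iff₀ h0]
    exact le_csInf ⟨L, mem_localLipBounds hg hL hx r⟩ fun ℓ ⟨_, hℓ⟩ =>
      (div_le_iff₀ h0).2 (hℓ z hz hzr)

end LocalLipConst

/-- The slope of `pen_x` on `[ε_{k-2}, ε_{k-1}]`, with `σ k = S_k^c(x)`. -/
noncomputable def penSlope (e σ : ℤ → ℝ) (L : ℝ) (k : ℤ) : ℝ :=
  σ k + 3 * L * (e (k - 2) / e (k - 1))

lemma penSlope_mono {e σ : ℤ → ℝ} {L : ℝ} (hσ : Monotone σ) (hL : 0 ≤ L)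
    (hratio : ∀ k, e (k - 1) / e k ≤ e k / e (k + 1)) : Monotone (penSlope e σ L) := by
  have hmono : Monotone fun k => e (k - 2) / e (k - 1) :=
    monotone_int_of_le_succ fun k => by
      have h := hratio (k - 1)
      rw [sub_add_cancel, show k - 1 - 1 = k - 2 by ring] at h
      simpa only [show k + 1 - 2 = k - 1 by ring, add_sub_cancel_right] using h
  exact hσ.add fun _ _ hij => mul_le_mul_of_nonneg_left (hmono hij) (by positivity)

section PenLowerBound

variable {e σ : ℤ → ℝ} {L : ℝ} {p : ℝ → ℝ}

lemma mul_le_pen_of_le_of_le_two_mul (he : ∀ k, 0 < e k) (hgrow : ∀ k, 6 * e (k - 1) ≤ e k)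
    (hL : 0 ≤ L) (hσL : ∀ k, σ k ≤ L) (hp : ∀ t, 0 ≤ t → 0 ≤ p t)
    (hlin : ∀ k s t, e (k - 2) ≤ s → s ≤ t → t ≤ e (k - 1) →
      p t - p s = penSlope e σ L k * (t - s))
    {m : ℤ} {t : ℝ} (ht : t ≤ e (m - 1)) (h2t : e (m - 1) ≤ 2 * t) : σ m * t ≤ p t := by
  set a := e (m - 2)
  set b := e (m - 1)
  have ha : 0 < a := he _
  have hb : 0 < b := he _
  have hab : 6 * a ≤ b := by simpa [a, b, show m - 1 - 1 = m - 2 by ring] using hgrow (m - 1)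
  have hstep := hlin m a t le_rfl (by linarith) ht
  -- the extra slope `3L·a/b` on `[a, t]` pays for `σ m · a ≤ L · a`
  have hextra : a ≤ 3 * (a / b) * (t - a) := calc
    a = a / b * b := (div_mul_cancel₀ a hb.ne').symm
    _ ≤ a / b * (3 * (t - a)) := mul_le_mul_of_nonneg_left (by linarith) (by positivity)
    _ = 3 * (a / b) * (t - a) := by ring
  rw [penSlope] at hstep
  linarith [mul_le_mul_of_nonneg_left hextra hL, mul_le_mul_of_nonneg_right (hσL m) ha.le,
    hp a ha.le]

lemma mul_le_pen_of_mem_Icc (he : ∀ k, 0 < e k) (hgrow : ∀ k, 6 * e (k - 1) ≤ e k)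
    (hL : 0 ≤ L) (hσ : Monotone σ) (hσL : ∀ k, σ k ≤ L) (hp : ∀ t, 0 ≤ t → 0 ≤ p t)
    (hlin : ∀ k s t, e (k - 2) ≤ s → s ≤ t → t ≤ e (k - 1) →
      p t - p s = penSlope e σ L k * (t - s))
    {m : ℤ} {t : ℝ} (ht₁ : e (m - 1) ≤ t) (ht₂ : t ≤ e m) : σ m * t ≤ p t := by
  have hleft : σ m * e (m - 1) ≤ p (e (m - 1)) :=
    mul_le_pen_of_le_of_le_two_mul he hgrow hL hσL hp hlin le_rfl (by linarith [he (m - 1)])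
  have hstep := hlin (m + 1) (e (m - 1)) t (by rw [show m + 1 - 2 = m - 1 by ring]) ht₁
    (by rwa [show m + 1 - 1 = m by ring])
  have hslope : σ m ≤ penSlope e σ L (m + 1) :=
    (hσ (by omega : m ≤ m + 1)).trans <| le_add_of_nonneg_right <|
      mul_nonneg (by linarith) (div_nonneg (he _).le (he _).le)
  linarith [mul_le_mul_of_nonneg_right hslope (sub_nonneg.2 ht₁)]

lemma mul_le_pen_of_le_two_mul (he : ∀ k, 0 < e k) (hgrow : ∀ k, 6 * e (k - 1) ≤ e k)
    (hL : 0 ≤ L) (hσ : Monotone σ) (hσL : ∀ k, σ k ≤ L)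
    (hp : ∀ t, 0 ≤ t → 0 ≤ p t)
    (hlin : ∀ k s t, e (k - 2) ≤ s → s ≤ t → t ≤ e (k - 1) →
      p t - p s = penSlope e σ L k * (t - s))
    {j : ℤ} {t : ℝ} (h2t : e (j - 1) ≤ 2 * t) : σ j * t ≤ p t := by
  by_cases ht : t ≤ e (j - 1)
  · exact mul_le_pen_of_le_of_le_two_mul he hgrow hL hσL hp hlin ht h2t
  rw [not_le] at ht
  obtain ⟨m, hm₁, hm₂⟩ := exists_sub_one_le_and_lt_of_mul_le (by norm_num) he hgrow
    ((he _).trans ht)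
  have hjm : j ≤ m := by
    have := (monotone_of_mul_le (by norm_num) (fun k => (he k).le) hgrow).reflect_lt
      (ht.trans hm₂)
    omega
  calc σ j * t ≤ σ m * t := mul_le_mul_of_nonneg_right (hσ hjm) (by linarith [he (j - 1)])
    _ ≤ p t := mul_le_pen_of_mem_Icc he hgrow hL hσ hσL hp hlin hm₁ hm₂.le

end PenLowerBound

lemma sub_two_mul_dist_le_add_pen {X : Type*} [PseudoMetricSpace X] {e σ : ℤ → ℝ}
    {p : ℝ → ℝ} {g : X → ℝ} {L : ℝ} {x x₀ w : X} (hL : 0 ≤ L) (hσ0 : ∀ j, 0 ≤ σ j)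
    (hσL : ∀ j, σ j ≤ L) (hlip : |g x₀ - g x| ≤ L * dist x x₀)
    (hslope : ∀ j, dist x x₀ < e j → |g x₀ - g x| ≤ σ j * dist x x₀)
    (hp : ∀ t, 0 ≤ t → 0 ≤ p t) (hpen : ∀ j t, e (j - 1) ≤ 2 * t → σ j * t ≤ p t)
    (hbracket : ∀ u, 0 < u → ∃ j, e (j - 1) ≤ u ∧ u < e j) :
    g x₀ - 2 * L * dist x₀ w ≤ g x + p (dist x w) := by
  have htri : dist x x₀ ≤ dist x w + dist x₀ w := dist_triangle_right x x₀ w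
  have hD : 0 ≤ dist x₀ w := dist_nonneg
  have hpt := hp (dist x w) dist_nonneg
  rcases (dist_nonneg : 0 ≤ dist x x₀).eq_or_lt with h0 | h0
  · rw [← h0, mul_zero] at hlip
    linarith [le_of_abs_le hlip, mul_nonneg hL hD]
  obtain ⟨j, hj₁, hj₂⟩ := hbracket _ h0
  by_cases h2t : e (j - 1) ≤ 2 * dist x w
  · linarith [le_of_abs_le (hslope j hj₂), hpen j _ h2t, mul_nonneg hL hD,
      mul_le_mul_of_nonneg_left htri (hσ0 j), mul_le_mul_of_nonneg_right (hσL j) hD]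
  · -- `2 d(x,w) < ε_{j-1} ≤ d(x,x₀) ≤ d(x,w) + d(x₀,w)` forces `d(x,x₀) < 2 d(x₀,w)`
    have hclose : dist x x₀ ≤ 2 * dist x₀ w := by linarith [not_le.1 h2t]
    linarith [le_of_abs_le hlip, mul_le_mul_of_nonneg_left hclose hL]

theorem incremental_ratio_upper_bound_general
    {X : Type*} [MetricSpace X] (C : Set X)
    (g : X → ℝ) (L ε : ℝ) (hε : 0 < ε) (hεL : ε ≤ L)
    (hg : ∀ x ∈ C, ∀ y ∈ C, |g x - g y| ≤ L * dist x y)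
    (e : ℤ → ℝ) (he : ∀ k : ℤ, 0 < e k)
    (hmono : ∀ k : ℤ, e (k - 1) / e k ≤ e k / e (k + 1))
    (hratio : ∀ k : ℤ, e (k - 1) / e k ≤ ε / (3 * (L + ε)))
    (S : X → ℤ → ℝ)
    (hS : ∀ x ∈ C, ∀ k : ℤ,
      S x k = sInf {ℓ : ℝ | 0 ≤ ℓ ∧ ∀ z ∈ C, dist z x < e k → |g z - g x| ≤ ℓ * dist x z})
    (pen : X → ℝ → ℝ)
    (hpen0 : ∀ x ∈ C, pen x 0 = 0)
    (hpennonneg : ∀ x ∈ C, ∀ t : ℝ, 0 ≤ t → 0 ≤ pen x t)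
    (hpencont : ∀ x ∈ C, ContinuousOn (pen x) (Set.Ici 0))
    (hpenlin : ∀ x ∈ C, ∀ k : ℤ, ∀ s t : ℝ, e (k - 2) ≤ s → s ≤ t → t ≤ e (k - 1) →
      pen x t - pen x s = (S x k + 3 * L * (e (k - 2) / e (k - 1))) * (t - s))
    (f : X → ℝ)
    (hf : ∀ y : X, f y = sInf ((fun x => g x + pen x (dist x y)) '' C))
    (xb : X) (hxb : xb ∈ C) (y : X) (k : ℤ)
    (hd1 : e (k - 3) ≤ dist xb y) (hd2 : dist xb y < e (k - 2)) :
    (f y - f xb) / dist xb y ≤ S xb (k - 1) + 3 * L * (e (k - 3) / e (k - 2)) := by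
  have hL : 0 ≤ L := hε.le.trans hεL
  have hgrow (k : ℤ) : 6 * e (k - 1) ≤ e k := six_mul_le_of_div_le hε hεL (he k) (hratio k)
  have he_mono := monotone_of_mul_le (by norm_num) (fun k => (he k).le) hgrow
  have hS_eq : ∀ x ∈ C, S x = fun k => localLipConst C g x (e k) := fun x hx => funext (hS x hx)
  have hS_mono : ∀ x ∈ C, Monotone (S x) := fun x hx =>
    hS_eq x hx ▸ (localLipConst_mono hg hL hx).comp he_mono
  have hS_le : ∀ x ∈ C, ∀ k, S x k ≤ L := fun x hx k => hS_eq x hx ▸ localLipConst_le hg hL hx _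
  have hlower : ∀ x ∈ C, ∀ w, g xb - 2 * L * dist xb w ≤ g x + pen x (dist x w) :=
    fun x hx w => sub_two_mul_dist_le_add_pen hL (fun j => hS_eq x hx ▸ localLipConst_nonneg _)
      (hS_le x hx) (dist_comm x xb ▸ hg xb hxb x hx)
      (fun j hj => hS_eq x hx ▸ abs_sub_le_localLipConst_mul hg hL hx hxb (dist_comm x xb ▸ hj))
      (hpennonneg x hx)
      (fun j t => mul_le_pen_of_le_two_mul he hgrow hL (hS_mono x hx) (hS_le x hx)
        (hpennonneg x hx) (hpenlin x hx))
      (fun u hu => exists_sub_one_le_and_lt_of_mul_le (by norm_num) he hgrow hu)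
  have hfxb : g xb ≤ f xb := hf xb ▸ le_csInf ((nonempty_of_mem hxb).image _)
    (forall_mem_image.2 fun x hx => by simpa using hlower x hx xb)
  have hfy : f y ≤ g xb + pen xb (dist xb y) :=
    hf y ▸ csInf_le ⟨_, forall_mem_image.2 fun x hx => hlower x hx y⟩ (mem_image_of_mem _ hxb)
  have hpen : pen xb (dist xb y) ≤ penSlope e (S xb) L (k - 1) * dist xb y :=
    pen_le_mul_of_mem_Icc (fun k => (he k).le) he_mono
      (tendsto_sub_nat_of_mul_le (by norm_num) (fun k => (he k).le) hgrow)
      (penSlope_mono (hS_mono xb hxb) hL hmono) (hpencont xb hxb 0 self_mem_Ici) (hpen0 xb hxb)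
      (hpenlin xb hxb) (by rwa [show k - 1 - 2 = k - 3 by ring])
      (by rw [show k - 1 - 1 = k - 2 by ring]; exact hd2.le)
  rw [penSlope, show k - 1 - 2 = k - 3 by ring, show k - 1 - 1 = k - 2 by ring] at hpen
  rw [div_le_iff₀ ((he _).trans_le hd1)]
  linarith

/-- In the slope-extension construction, if `x̄ ∈ C`, `y ∈ X`, `f(x̄) ≤ f(y)` and
`ε_{k−3} ≤ d(x̄,y) < ε_{k−2}`, then
`(f(y) − f(x̄))/d(x̄,y) ≤ S_{k−1}^c(x̄) + 3L·ε_{k−3}/ε_{k−2}`. -/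
theorem incremental_ratio_upper_bound
    {X : Type*} [MetricSpace X] (C : Set X) (hC : C.Nonempty)
    (g : X → ℝ) (L ε : ℝ) (hL : 0 < L) (hε : 0 < ε) (hεL : ε ≤ L)
    (hg : ∀ x ∈ C, ∀ y ∈ C, |g x - g y| ≤ L * dist x y)
    (e : ℤ → ℝ) (he : ∀ k : ℤ, 0 < e k)
    (hmono : ∀ k : ℤ, e (k - 1) / e k ≤ e k / e (k + 1))
    (hlim : Filter.Tendsto (fun k : ℤ => e (k - 1) / e k) Filter.atBot (nhds 0))
    (hratio : ∀ k : ℤ, e (k - 1) / e k ≤ ε / (3 * (L + ε)))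
    (S : X → ℤ → ℝ)
    (hS : ∀ x ∈ C, ∀ k : ℤ,
      S x k = sInf {ℓ : ℝ | 0 ≤ ℓ ∧ ∀ z ∈ C, dist z x < e k → |g z - g x| ≤ ℓ * dist x z})
    (pen : X → ℝ → ℝ)
    (hpen0 : ∀ x ∈ C, pen x 0 = 0)
    (hpennonneg : ∀ x ∈ C, ∀ t : ℝ, 0 ≤ t → 0 ≤ pen x t)
    (hpencont : ∀ x ∈ C, ContinuousOn (pen x) (Set.Ici 0))
    (hpenlin : ∀ x ∈ C, ∀ k : ℤ, ∀ s t : ℝ, e (k - 2) ≤ s → s ≤ t → t ≤ e (k - 1) →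
      pen x t - pen x s = (S x k + 3 * L * (e (k - 2) / e (k - 1))) * (t - s))
    (f : X → ℝ)
    (hf : ∀ y : X, f y = sInf ((fun x => g x + pen x (dist x y)) '' C))
    (xb : X) (hxb : xb ∈ C) (y : X) (k : ℤ)
    (hfy : f xb ≤ f y)
    (hd1 : e (k - 3) ≤ dist xb y) (hd2 : dist xb y < e (k - 2)) :
    (f y - f xb) / dist xb y ≤ S xb (k - 1) + 3 * L * (e (k - 3) / e (k - 2)) :=
  incremental_ratio_upper_bound_general C g L ε hε hεL hg e he hmono hratio S hS pen hpen0
    hpennonneg hpencont hpenlin f hf xb hxb y k hd1 hd2
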